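/- Let A = (Q, Σ, Δ, Q₀, F) be an NBA with Q₀ ≠ ∅, let B be a TDPA obtained from the unified construction for A, and let w : ℕ → Σ. If w ∈ L(B) then w ∈ L(A). -/

import Mathlib

/-! Core definitions: NBA, TDPA, ranked slices, and the unified
determinization construction. -/

universe u v

/-- A nondeterministic Büchi automaton over state type `Q` and alphabet `Alp`. -/
structure NBA (Q : Type u) (Alp : Type v) where
  delta : Q → Alp → Set Q
  Q0 : Set Q
  F : Set Q

namespace NBA

variable {Q : Type u} {Alp : Type v}

/-- `Δ(X, x)`: successors of a set of states. -/
def nextSet (A : NBA Q Alp) (X : Set Q) (x : Alp) : Set Q := ⋃ q ∈ X, A.delta q x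

/-- A run of the NBA on the word `w`. -/
def IsRun (A : NBA Q Alp) (w : ℕ → Alp) (q : ℕ → Q) : Prop :=
  q 0 ∈ A.Q0 ∧ ∀ i, q (i + 1) ∈ A.delta (q i) (w i)

/-- Acceptance: some run visits `F` infinitely often. -/
def Accepts (A : NBA Q Alp) (w : ℕ → Alp) : Prop :=
  ∃ q, A.IsRun w q ∧ ∀ N, ∃ i, N ≤ i ∧ q i ∈ A.F

end NBA

/-- A transition-based deterministic parity automaton. -/
structure TDPA (P : Type u) (Alp : Type v) where
  delta : P → Alp → P
  p0 : P
  c : P → Alp → ℕ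

namespace TDPA

variable {P : Type u} {Alp : Type v}

/-- The unique run of the TDPA on `w`. -/
def run (B : TDPA P Alp) (w : ℕ → Alp) : ℕ → P
  | 0 => B.p0
  | i + 1 => B.delta (B.run w i) (w i)

/-- Acceptance: the minimum priority occurring infinitely often on the run is even. -/
def Accepts (B : TDPA P Alp) (w : ℕ → Alp) : Prop :=
  ∃ m, (∀ N, ∃ i, N ≤ i ∧ B.c (B.run w i) (w i) = m) ∧
    (∀ m', (∀ N, ∃ i, N ≤ i ∧ B.c (B.run w i) (w i) = m') → m ≤ m') ∧ Even m

/-- Reachability from the initial state. -/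
def Reachable (B : TDPA P Alp) (p : P) : Prop :=
  ∃ l : List Alp, l.foldl B.delta B.p0 = p

end TDPA

/-- A (ranked) slice: a tuple `S 1, …, S n` of subsets of `Q` together with a
ranking function `rk`.  Only the values on `{1, …, n}` are relevant. -/
structure Slice (Q : Type u) where
  n : ℕ
  S : ℕ → Set Q
  rk : ℕ → ℕ

namespace Slice

variable {Q : Type u}

/-- A valid ranked slice: the sets are nonempty and pairwise disjoint, the ranking is a
bijection of `{1,…,n}` and the last set has rank `1`. -/
def Valid (s : Slice Q) : Prop :=
  (∀ i ∈ Set.Icc 1 s.n, (s.S i).Nonempty) ∧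
  (∀ i ∈ Set.Icc 1 s.n, ∀ j ∈ Set.Icc 1 s.n, i ≠ j → Disjoint (s.S i) (s.S j)) ∧
  Set.BijOn s.rk (Set.Icc 1 s.n) (Set.Icc 1 s.n) ∧
  (1 ≤ s.n → s.rk s.n = 1)

/-- `Q_t`: union of all sets of the slice. -/
def states (s : Slice Q) : Set Q := ⋃ i ∈ Set.Icc 1 s.n, s.S i

/-- `idx q`: the (unique) index of the set containing `q`. -/
noncomputable def idx (s : Slice Q) (q : Q) : ℕ :=
  sInf {i | 1 ≤ i ∧ i ≤ s.n ∧ q ∈ s.S i}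

end Slice

variable {Q : Type u} {Alp : Type v}

/-- `Δ_t(q, x)`: successors of `q` not reachable from a set strictly to the left. -/
noncomputable def dT (A : NBA Q Alp) (s : Slice Q) (q : Q) (x : Alp) : Set Q :=
  A.delta q x \ A.nextSet (⋃ i ∈ Set.Ico 1 (s.idx q), s.S i) x

/-- `Δ_t(X, x)` for a set `X`. -/
noncomputable def dTs (A : NBA Q Alp) (s : Slice Q) (X : Set Q) (x : Alp) : Set Q :=
  ⋃ q ∈ X, dT A s q x

/-- The sets `Ŝ_j` of the step stage: odd positions are left (accepting) children, even
positions right (non-accepting) children. -/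
noncomputable def hatS (A : NBA Q Alp) (s : Slice Q) (x : Alp) (j : ℕ) : Set Q :=
  if j % 2 = 1 then dTs A s (s.S ((j + 1) / 2)) x ∩ A.F
  else dTs A s (s.S (j / 2)) x \ A.F

/-- The ranking `α̂` of the step stage. -/
def hatRk (s : Slice Q) (j : ℕ) : ℕ :=
  if j % 2 = 1 then s.n + 1 else s.rk (j / 2)

/-- The prune stage: `xs 1 < … < xs nt` enumerates the indices of the nonempty sets
among `Ŝ_1, …, Ŝ_{2n}`, and `xs (nt+1) = 2n + 1`. -/
def IsPrune (A : NBA Q Alp) (s : Slice Q) (x : Alp) (nt : ℕ) (xs : ℕ → ℕ) : Prop :=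
  StrictMonoOn xs (Set.Icc 1 nt) ∧
  (∀ i ∈ Set.Icc 1 nt, xs i ∈ Set.Icc 1 (2 * s.n) ∧ (hatS A s x (xs i)).Nonempty) ∧
  (∀ j ∈ Set.Icc 1 (2 * s.n), (hatS A s x j).Nonempty → ∃ i ∈ Set.Icc 1 nt, xs i = j) ∧
  xs (nt + 1) = 2 * s.n + 1

/-- The ranking `α̃` after prune: `α̃ i = min {α̂ j | xs i ≤ j < xs (i+1)}`. -/
noncomputable def tildeRk (s : Slice Q) (xs : ℕ → ℕ) (i : ℕ) : ℕ :=
  sInf (hatRk s '' {j | xs i ≤ j ∧ j < xs (i + 1)})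

/-- The green ranks: ranks in the image of `α̃` that mark an empty set after step. -/
def greenSet (A : NBA Q Alp) (s : Slice Q) (x : Alp) (nt : ℕ) (xs : ℕ → ℕ) : Set ℕ :=
  {r | (∃ i ∈ Set.Icc 1 nt, tildeRk s xs i = r) ∧
    ∃ j ∈ Set.Icc 1 (2 * s.n), hatS A s x j = ∅ ∧ hatRk s j = r}

/-- The red ranks: ranks in the image of `α̂` but not of `α̃`. -/
def redSet (s : Slice Q) (nt : ℕ) (xs : ℕ → ℕ) : Set ℕ :=
  {r | (∃ j ∈ Set.Icc 1 (2 * s.n), hatRk s j = r) ∧ ¬ ∃ i ∈ Set.Icc 1 nt, tildeRk s xs i = r}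

open Classical in
/-- The dominating rank: the minimum of the active ranks `G ∪ R`, or `|Q| + 1` if there
is no active rank. -/
noncomputable def domRank (G R : Set ℕ) (card : ℕ) : ℕ :=
  if (G ∪ R).Nonempty then sInf (G ∪ R) else card + 1

/-- A partition of `{1,…,nt}` into consecutive intervals, described by its boundaries:
the `j`-th interval is `Icc (b (j-1) + 1) (b j)`. -/
def IsIntervalPartition (nt n' : ℕ) (b : ℕ → ℕ) : Prop :=
  b 0 = 0 ∧ b n' = nt ∧ StrictMonoOn b (Set.Icc 0 n')

/-- The merge constraints: intervals containing a rank `< k` are singletons, and an index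
carrying rank `k` is the maximum of its interval. -/
def MergeConstraints (n' : ℕ) (b : ℕ → ℕ) (aT : ℕ → ℕ) (k : ℕ) : Prop :=
  ∀ j ∈ Set.Icc 1 n', ∀ l ∈ Set.Icc (b (j - 1) + 1) (b j),
    (aT l < k → b j = b (j - 1) + 1) ∧ (aT l = k → l = b j)

/-- A full transition of the (unified) construction, via prune data `(nt, xs)` and the
merge partition `(n', b)`. -/
noncomputable def TransVia [Fintype Q] (A : NBA Q Alp) (s : Slice Q) (x : Alp)
    (s' : Slice Q) (pr : ℕ) (nt : ℕ) (xs : ℕ → ℕ) (n' : ℕ) (b : ℕ → ℕ) : Prop :=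
  IsPrune A s x nt xs ∧
  IsIntervalPartition nt n' b ∧
  MergeConstraints n' b (tildeRk s xs)
    (domRank (greenSet A s x nt xs) (redSet s nt xs) (Fintype.card Q)) ∧
  ((domRank (greenSet A s x nt xs) (redSet s nt xs) (Fintype.card Q) ∈ greenSet A s x nt xs ∧
      pr = 2 * domRank (greenSet A s x nt xs) (redSet s nt xs) (Fintype.card Q)) ∨
   (domRank (greenSet A s x nt xs) (redSet s nt xs) (Fintype.card Q) ∉ greenSet A s x nt xs ∧
      pr = 2 * domRank (greenSet A s x nt xs) (redSet s nt xs) (Fintype.card Q) - 1)) ∧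
  s'.n = n' ∧
  (∀ i ∈ Set.Icc 1 n', s'.S i = ⋃ j ∈ Set.Icc (b (i - 1) + 1) (b i), hatS A s x (xs j)) ∧
  s'.Valid ∧
  (∀ i ∈ Set.Icc 1 n', ∀ j ∈ Set.Icc 1 n',
    sInf (tildeRk s xs '' Set.Icc (b (i - 1) + 1) (b i)) <
      sInf (tildeRk s xs '' Set.Icc (b (j - 1) + 1) (b j)) → s'.rk i < s'.rk j)

/-- A transition of the unified construction (any valid merge partition). -/
noncomputable def UnifiedTrans [Fintype Q] (A : NBA Q Alp) (s : Slice Q) (x : Alp)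
    (s' : Slice Q) (pr : ℕ) : Prop :=
  ∃ nt xs n' b, TransVia A s x s' pr nt xs n' b

/-- A transition of the Muller-Schupp construction (merge partition into singletons). -/
noncomputable def MSTrans [Fintype Q] (A : NBA Q Alp) (s : Slice Q) (x : Alp)
    (s' : Slice Q) (pr : ℕ) : Prop :=
  ∃ nt xs, TransVia A s x s' pr nt xs nt id

/-- `B` is obtained from the unified construction for `A`. -/
noncomputable def ObtainedUnified [Fintype Q] (A : NBA Q Alp) (B : TDPA (Slice Q) Alp) : Prop :=
  B.p0.n = 1 ∧ B.p0.S 1 = A.Q0 ∧ B.p0.rk 1 = 1 ∧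
  ∀ p, B.Reachable p → ∀ x, UnifiedTrans A p x (B.delta p x) (B.c p x)

/-- `B` is obtained from the Muller-Schupp construction for `A`. -/
noncomputable def ObtainedMS [Fintype Q] (A : NBA Q Alp) (B : TDPA (Slice Q) Alp) : Prop :=
  B.p0.n = 1 ∧ B.p0.S 1 = A.Q0 ∧ B.p0.rk 1 = 1 ∧
  ∀ p, B.Reachable p → ∀ x, MSTrans A p x (B.delta p x) (B.c p x)

/-!
Let `2k` be the least priority occurring infinitely often. Once all priorities are at least
`2k`, no rank `≤ k` is ever red, so after a green step of priority `2k` there is forever a set of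
rank `k`, the host. Successors of states right of the host stay right of it, successors of
states at or left of it stay at or left of it, and non-accepting successors of host states stay
in the host; at a green step host states have no non-accepting successors at all. Every state
has a parent in the previous slice, and König's lemma gives a run of `A` whose states all have
host descendants arbitrarily late. If this run eventually avoided `F`, it would eventually stay
strictly on one side of the host, and tracing a later host state back through its ancestors
contradicts either side.
-/

open Filter

theorem le_of_forall_mem_image_Icc {n k : ℕ} {f : ℕ → ℕ}
    (h : ∀ v ∈ Set.Icc 1 k, ∃ i ∈ Set.Icc 1 n, f i = v) : k ≤ n := by
  have := Finset.card_le_card_of_surjOn (s := Finset.Icc 1 n) (t := Finset.Icc 1 k) f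
    (by simpa [Set.SurjOn, Set.subset_def] using h)
  simpa using this

theorem card_filter_lt_eq {n k : ℕ} {f : ℕ → ℕ} (hpos : ∀ i ∈ Set.Icc 1 n, 1 ≤ f i)
    (hinj : ∀ i ∈ Set.Icc 1 n, ∀ j ∈ Set.Icc 1 n, f i = f j → f i < k → i = j)
    (hsurj : ∀ v ∈ Set.Ico 1 k, ∃ i ∈ Set.Icc 1 n, f i = v) :
    ((Finset.Icc 1 n).filter (f · < k)).card = k - 1 := by
  rw [← Nat.card_Ico 1 k]
  apply Finset.card_nbij f
  · intro i hi
    simp only [Finset.coe_filter, Finset.mem_Icc, Set.mem_ofPred_eq] at hi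
    simpa using ⟨hpos i hi.1, hi.2⟩
  · intro i hi j hj hij
    simp only [Finset.coe_filter, Finset.mem_Icc, Set.mem_ofPred_eq] at hi hj
    exact hinj i hi.1 j hj.1 hij hi.2
  · intro v hv
    obtain ⟨i, hi, rfl⟩ := hsurj v (by simpa using hv)
    simp only [Finset.coe_Ico, Set.mem_Ico] at hv
    exact ⟨i, by simpa using ⟨hi, hv.2⟩, rfl⟩

theorem Set.BijOn.eq_of_lt_imp_lt {n k a : ℕ} {f g : ℕ → ℕ}
    (hg : Set.BijOn g (Set.Icc 1 n) (Set.Icc 1 n))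
    (hfg : ∀ i ∈ Set.Icc 1 n, ∀ j ∈ Set.Icc 1 n, f i < f j → g i < g j)
    (hpos : ∀ i ∈ Set.Icc 1 n, 1 ≤ f i)
    (hinj : ∀ i ∈ Set.Icc 1 n, ∀ j ∈ Set.Icc 1 n, f i = f j → f i ≤ k → i = j)
    (hsurj : ∀ v ∈ Set.Ico 1 k, ∃ i ∈ Set.Icc 1 n, f i = v)
    (ha : a ∈ Set.Icc 1 n) (hfa : f a = k) : g a = k := by
  have hga := hg.mapsTo ha
  have hfilter : (Finset.Icc 1 n).filter (g · < g a) = (Finset.Icc 1 n).filter (f · < k) := by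
    ext i
    simp only [Finset.mem_filter, Finset.mem_Icc, and_congr_right_iff]
    intro hi
    refine ⟨fun hlt => ?_, fun hlt => hfg i hi a ha (hfa ▸ hlt)⟩
    have hle : f i ≤ k := hfa ▸ not_lt.1 fun h => (hfg a ha i hi h).not_gt hlt
    refine lt_of_le_of_ne hle fun heq => ?_
    rw [hinj i hi a ha (heq.trans hfa.symm) hle] at hlt
    exact lt_irrefl _ hlt
  have hcard_g := card_filter_lt_eq (f := g) (k := g a) (fun i hi => (hg.mapsTo hi).1)
    (fun i hi j hj hij _ => hg.injOn hi hj hij)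
    (fun v hv => hg.surjOn ⟨hv.1, hv.2.le.trans hga.2⟩)
  have hcard_f := card_filter_lt_eq hpos (fun i hi j hj hij hlt => hinj i hi j hj hij hlt.le) hsurj
  rw [hfilter] at hcard_g
  have hk : 1 ≤ k := hfa ▸ hpos a ha
  have := hga.1
  omega

namespace IsIntervalPartition

variable {nt n' : ℕ} {b : ℕ → ℕ}

theorem apply_sub_one_lt (hb : IsIntervalPartition nt n' b) {i : ℕ} (hi : i ∈ Set.Icc 1 n') :
    b (i - 1) < b i :=
  hb.2.2 ⟨Nat.zero_le _, by grind⟩ ⟨Nat.zero_le _, hi.2⟩ (by grind)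

theorem le_of_mem_block (hb : IsIntervalPartition nt n' b) {i₁ i₂ l₁ l₂ : ℕ}
    (hi₁ : i₁ ∈ Set.Icc 1 n') (hi₂ : i₂ ∈ Set.Icc 1 n')
    (hl₁ : l₁ ∈ Set.Icc (b (i₁ - 1) + 1) (b i₁)) (hl₂ : l₂ ∈ Set.Icc (b (i₂ - 1) + 1) (b i₂))
    (hl : l₁ ≤ l₂) : i₁ ≤ i₂ := by
  obtain ⟨-, hi₁⟩ := hi₁
  obtain ⟨hl₁, -⟩ := hl₁
  obtain ⟨-, hl₂⟩ := hl₂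
  by_contra! hlt
  have := hb.2.2.monotoneOn ⟨Nat.zero_le _, hi₂.2⟩ ⟨Nat.zero_le _, by omega⟩
    (show i₂ ≤ i₁ - 1 by omega)
  omega

theorem mem_Icc_of_mem_block (hb : IsIntervalPartition nt n' b) {i l : ℕ}
    (hi : i ∈ Set.Icc 1 n') (hl : l ∈ Set.Icc (b (i - 1) + 1) (b i)) : l ∈ Set.Icc 1 nt := by
  have := hb.2.2.monotoneOn ⟨Nat.zero_le _, hi.2⟩ ⟨Nat.zero_le _, le_rfl⟩ hi.2
  rw [hb.2.1] at this
  exact ⟨by grind, hl.2.trans this⟩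

theorem exists_mem_block (hb : IsIntervalPartition nt n' b) {l : ℕ} (hl : l ∈ Set.Icc 1 nt) :
    ∃ i ∈ Set.Icc 1 n', l ∈ Set.Icc (b (i - 1) + 1) (b i) := by
  classical
  have hex : ∃ i, l ≤ b i := ⟨n', hb.2.1 ▸ hl.2⟩
  have hmin := Nat.find_spec hex
  have hle : Nat.find hex ≤ n' := Nat.find_min' hex (hb.2.1 ▸ hl.2)
  have hpos : 1 ≤ Nat.find hex := by
    by_contra! h0
    rw [Nat.lt_one_iff.1 h0, hb.1] at hmin
    exact absurd hmin (by grind)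
  have hprev : ¬ l ≤ b (Nat.find hex - 1) := Nat.find_min hex (by omega)
  exact ⟨Nat.find hex, ⟨hpos, hle⟩, by omega, hmin⟩

end IsIntervalPartition

section Ancestor

variable {α : Type*}

/-- The ancestor at time `s` of `q` at time `t`, where `par t'` maps time `t' + 1` to time `t'`. -/
def ancestor (par : ℕ → α → α) (s : ℕ) : ℕ → α → α
  | 0, q => q
  | t + 1, q => if s ≤ t then ancestor par s t (par t q) else q

variable {par : ℕ → α → α}

@[simp]
theorem ancestor_self (s : ℕ) (q : α) : ancestor par s s q = q := by
  cases s with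
  | zero => rfl
  | succ s => simp [ancestor]

theorem ancestor_succ {s t : ℕ} (h : s ≤ t) (q : α) :
    ancestor par s (t + 1) q = ancestor par s t (par t q) := if_pos h

theorem ancestor_eq_par {s t : ℕ} (h : s < t) (q : α) :
    ancestor par s t q = par s (ancestor par (s + 1) t q) := by
  induction t, h using Nat.le_induction generalizing q with
  | base => rw [ancestor_succ le_rfl, ancestor_self, ancestor_self]
  | succ t hst ih => rw [ancestor_succ (by omega), ancestor_succ (by omega), ih]

theorem ancestor_mem {X : ℕ → Set α} (hX : ∀ t, ∀ q ∈ X (t + 1), par t q ∈ X t) {s t : ℕ}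
    (h : s ≤ t) {q : α} (hq : q ∈ X t) : ancestor par s t q ∈ X s := by
  induction t, h using Nat.le_induction generalizing q with
  | base => rwa [ancestor_self]
  | succ t hst ih => rw [ancestor_succ hst]; exact ih (hX t q hq)

/-- König's lemma; each next node of the branch is found by pigeonhole over the finitely many
candidates. -/
theorem exists_branch_of_frequently_nonempty [Finite α] {X G : ℕ → Set α}
    (hX : ∀ t, ∀ q ∈ X (t + 1), par t q ∈ X t) (hGX : ∀ t, G t ⊆ X t)
    (hG : ∃ᶠ t in atTop, (G t).Nonempty) :
    ∃ r : ℕ → α, (∀ t, r t ∈ X t) ∧ (∀ t, par t (r (t + 1)) = r t) ∧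
      ∀ s, ∃ᶠ t in atTop, ∃ q ∈ G t, ancestor par s t q = r s := by
  classical
  set D : ℕ → α → Prop := fun s q => ∃ᶠ t in atTop, ∃ q' ∈ G t, ancestor par s t q' = q
  have hstart : ∃ q, D 0 q :=
    frequently_exists.1 (hG.mono fun t ⟨q', hq'⟩ => ⟨_, q', hq', rfl⟩)
  have hstep : ∀ s q, D s q → ∃ q'', D (s + 1) q'' ∧ par s q'' = q := by
    intro s q hq
    have : ∃ᶠ t in atTop, ∃ q'', (∃ q' ∈ G t, ancestor par (s + 1) t q' = q'') ∧
        par s q'' = q := by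
      refine (hq.and_eventually (eventually_gt_atTop s)).mono fun t ⟨⟨q', hq', hanc⟩, hst⟩ => ?_
      exact ⟨_, ⟨q', hq', rfl⟩, (ancestor_eq_par hst q').symm.trans hanc⟩
    obtain ⟨q'', hq''⟩ := frequently_exists.1 this
    exact ⟨q'', hq''.mono fun _ h => h.1, hq''.exists.choose_spec.2⟩
  obtain ⟨q₀, hq₀⟩ := hstart
  choose! next hnext using hstep
  let r : ℕ → α := fun s => Nat.rec q₀ (fun s q => next s q) s
  have hr : ∀ s, D s (r s) := fun s => by
    induction s with
    | zero => exact hq₀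
    | succ s ih => exact (hnext s _ ih).1
  refine ⟨r, fun s => ?_, fun t => (hnext t _ (hr t)).2, hr⟩
  obtain ⟨t, ⟨q, hq, hanc⟩, hst⟩ := ((hr s).and_eventually (eventually_ge_atTop s)).exists
  exact hanc ▸ ancestor_mem hX hst (hGX t hq)

end Ancestor

theorem eventually_le_of_forall_frequently_eq {f : ℕ → ℕ} {m : ℕ}
    (h : ∀ m', (∃ᶠ t in atTop, f t = m') → m ≤ m') : ∀ᶠ t in atTop, m ≤ f t := by
  have hfin : ∀ v ∈ Finset.range m, ∀ᶠ t in atTop, f t ≠ v := fun v hv =>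
    not_frequently.1 fun hv' => absurd (h v hv') (by simpa using hv)
  filter_upwards [(Finset.range m).eventually_all.2 hfin] with t ht
  by_contra! hlt
  exact ht (f t) (Finset.mem_range.2 hlt) rfl

theorem TDPA.reachable_run {P : Type u} (B : TDPA P Alp) (w : ℕ → Alp) (t : ℕ) :
    B.Reachable (B.run w t) := by
  induction t with
  | zero => exact ⟨[], rfl⟩
  | succ t ih =>
    obtain ⟨l, hl⟩ := ih
    exact ⟨l ++ [w t], by rw [List.foldl_append, hl]; rfl⟩

theorem TDPA.Accepts.exists_even {P : Type u} {B : TDPA P Alp} {w : ℕ → Alp}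
    (hw : B.Accepts w) : ∃ k, (∃ᶠ t in atTop, B.c (B.run w t) (w t) = 2 * k) ∧
      ∀ᶠ t in atTop, 2 * k ≤ B.c (B.run w t) (w t) := by
  obtain ⟨m, hio, hmin, k, rfl⟩ := hw
  refine ⟨k, frequently_atTop.2 fun N => by simpa [two_mul] using hio N, ?_⟩
  rw [two_mul]
  exact eventually_le_of_forall_frequently_eq fun m' hm' => hmin m' (frequently_atTop.1 hm')

namespace Slice

variable {s : Slice Q}

theorem idx_eq (hs : s.Valid) {q : Q} {i : ℕ} (hi : i ∈ Set.Icc 1 s.n) (hq : q ∈ s.S i) :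
    s.idx q = i := by
  have : {i' | 1 ≤ i' ∧ i' ≤ s.n ∧ q ∈ s.S i'} = {i} := by
    ext i'
    refine ⟨fun ⟨h₁, h₂, hq'⟩ => ?_, fun h => h ▸ ⟨hi.1, hi.2, hq⟩⟩
    by_contra hne
    exact Set.disjoint_left.1 (hs.2.1 i' ⟨h₁, h₂⟩ i hi hne) hq' hq
  rw [idx, this, csInf_singleton]

theorem idx_mem_Icc (hs : s.Valid) {q : Q} (hq : q ∈ s.states) :
    s.idx q ∈ Set.Icc 1 s.n ∧ q ∈ s.S (s.idx q) := by
  obtain ⟨i, hi, hqi⟩ := Set.mem_iUnion₂.1 hq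
  exact (idx_eq hs hi hqi).symm ▸ ⟨hi, hqi⟩

theorem states_eq_of_n_eq_one (hn : s.n = 1) : s.states = s.S 1 := by
  simp [states, hn]

noncomputable def rankIdx (s : Slice Q) (r : ℕ) : ℕ := Function.invFunOn s.rk (Set.Icc 1 s.n) r

theorem rankIdx_spec (hs : s.Valid) {r : ℕ} (hr : r ∈ Set.Icc 1 s.n) :
    s.rankIdx r ∈ Set.Icc 1 s.n ∧ s.rk (s.rankIdx r) = r :=
  Function.invFunOn_pos (hs.2.2.1.surjOn hr)

theorem eq_rankIdx (hs : s.Valid) {i : ℕ} (hi : i ∈ Set.Icc 1 s.n) : i = s.rankIdx (s.rk i) :=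
  hs.2.2.1.injOn hi (rankIdx_spec hs (hs.2.2.1.mapsTo hi)).1
    (rankIdx_spec hs (hs.2.2.1.mapsTo hi)).2.symm

end Slice

section Step

variable {A : NBA Q Alp} {s : Slice Q} {x : Alp}

/-- Any choice will do: the index in `s` of the chosen state is determined by `q'`
(`idx_eq_of_mem_dT`). -/
noncomputable def parent (A : NBA Q Alp) (s : Slice Q) (x : Alp) (q' : Q) : Q :=
  @Classical.epsilon Q ⟨q'⟩ fun q => q ∈ s.states ∧ q' ∈ dT A s q x

theorem idx_eq_of_mem_dT (hs : s.Valid) {q₁ q₂ q' : Q} (h₁ : q₁ ∈ s.states)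
    (h₂ : q₂ ∈ s.states) (hq₁ : q' ∈ dT A s q₁ x) (hq₂ : q' ∈ dT A s q₂ x) :
    s.idx q₁ = s.idx q₂ := by
  have key : ∀ {q₁ q₂}, q₁ ∈ s.states → q' ∈ dT A s q₁ x → q' ∈ dT A s q₂ x →
      ¬ s.idx q₁ < s.idx q₂ := fun h₁ hq₁ hq₂ hlt =>
    hq₂.2 <| Set.mem_biUnion (Set.mem_biUnion (x := s.idx _)
      ⟨(Slice.idx_mem_Icc hs h₁).1.1, hlt⟩ (Slice.idx_mem_Icc hs h₁).2) hq₁.1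
  exact le_antisymm (not_lt.1 (key h₂ hq₂ hq₁)) (not_lt.1 (key h₁ hq₁ hq₂))

theorem parent_spec {q' : Q} (h : ∃ q ∈ s.states, q' ∈ dT A s q x) :
    parent A s x q' ∈ s.states ∧ q' ∈ dT A s (parent A s x q') x :=
  Classical.epsilon_spec (p := fun q => q ∈ s.states ∧ q' ∈ dT A s q x) (by simpa using h)

theorem idx_parent (hs : s.Valid) {q q' : Q} (hq : q ∈ s.states) (h : q' ∈ dT A s q x) :
    s.idx (parent A s x q') = s.idx q :=
  have hp := parent_spec ⟨q, hq, h⟩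
  idx_eq_of_mem_dT hs hp.1 hq hp.2 h

theorem exists_mem_dT_of_mem_hatS {j : ℕ} {q' : Q} (hq' : q' ∈ hatS A s x j) :
    ∃ q ∈ s.S ((j + 1) / 2), q' ∈ dT A s q x := by
  have : q' ∈ dTs A s (s.S ((j + 1) / 2)) x := by
    unfold hatS at hq'
    split_ifs at hq' with hj
    · exact hq'.1
    · rw [show (j + 1) / 2 = j / 2 by omega]
      exact hq'.1
  simpa [dTs] using this

theorem mem_F_of_mem_hatS {j : ℕ} (hj : j % 2 = 1) {q : Q} (hq : q ∈ hatS A s x j) : q ∈ A.F := by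
  simp only [hatS, hj, if_true] at hq
  exact hq.2

theorem hatRk_mem_Icc (hs : s.Valid) {j : ℕ} (hj : j ∈ Set.Icc 1 (2 * s.n)) :
    hatRk s j ∈ Set.Icc 1 (s.n + 1) := by
  obtain ⟨hj₁, hj₂⟩ := hj
  unfold hatRk
  split_ifs
  · exact ⟨by omega, le_rfl⟩
  · have := hs.2.2.1.mapsTo (show j / 2 ∈ Set.Icc 1 s.n from ⟨by omega, by omega⟩)
    exact ⟨this.1, by grind⟩

theorem eq_two_mul_rankIdx (hs : s.Valid) {j : ℕ} (hj : j ∈ Set.Icc 1 (2 * s.n))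
    (hle : hatRk s j ≤ s.n) : j = 2 * s.rankIdx (hatRk s j) := by
  obtain ⟨hj₁, hj₂⟩ := hj
  unfold hatRk at hle ⊢
  split_ifs at hle ⊢
  · omega
  · rw [← Slice.eq_rankIdx hs ⟨by omega, by omega⟩]
    omega

end Step

namespace IsPrune

variable {A : NBA Q Alp} {s : Slice Q} {x : Alp} {nt : ℕ} {xs : ℕ → ℕ}

theorem strictMonoOn_Icc_succ (hp : IsPrune A s x nt xs) :
    StrictMonoOn xs (Set.Icc 1 (nt + 1)) := by
  intro l hl l' hl' hlt
  rcases eq_or_lt_of_le hl'.2 with rfl | hl'nt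
  · rw [hp.2.2.2]
    have := (hp.2.1 l ⟨hl.1, by omega⟩).1.2
    omega
  · exact hp.1 ⟨hl.1, by omega⟩ ⟨hl'.1, by omega⟩ hlt

theorem mem_Icc_of_mem_window (hp : IsPrune A s x nt xs) {l j : ℕ} (hl : l ∈ Set.Icc 1 nt)
    (hj : j ∈ Set.Ico (xs l) (xs (l + 1))) : j ∈ Set.Icc 1 (2 * s.n) := by
  have h₁ := (hp.2.1 l hl).1.1
  obtain ⟨hl₁, hl₂⟩ := hl
  have h₂ := hp.strictMonoOn_Icc_succ.monotoneOn ⟨by omega, by omega⟩ ⟨by omega, le_rfl⟩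
    (show l + 1 ≤ nt + 1 by omega)
  rw [hp.2.2.2] at h₂
  exact ⟨h₁.trans hj.1, by grind⟩

theorem eq_of_mem_window (hp : IsPrune A s x nt xs) {l l' j : ℕ} (hl : l ∈ Set.Icc 1 nt)
    (hl' : l' ∈ Set.Icc 1 nt) (hj : j ∈ Set.Ico (xs l) (xs (l + 1)))
    (hj' : j ∈ Set.Ico (xs l') (xs (l' + 1))) : l = l' := by
  have hmono := hp.strictMonoOn_Icc_succ
  have key : ∀ {m m'}, m ∈ Set.Icc 1 nt → m' ∈ Set.Icc 1 nt → j < xs (m + 1) → xs m' ≤ j →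
      m' ≤ m := fun hm hm' hj hj' => by
    obtain ⟨hm₁, hm₂⟩ := hm
    obtain ⟨hm₁', hm₂'⟩ := hm'
    have := (hmono.lt_iff_lt ⟨hm₁', by omega⟩ ⟨by omega, by omega⟩).1 (hj'.trans_lt hj)
    omega
  exact le_antisymm (key hl' hl hj'.2 hj.1) (key hl hl' hj.2 hj'.1)

theorem self_mem_window (hp : IsPrune A s x nt xs) {l : ℕ} (hl : l ∈ Set.Icc 1 nt) :
    xs l ∈ Set.Ico (xs l) (xs (l + 1)) := by
  obtain ⟨hl₁, hl₂⟩ := hl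
  exact ⟨le_rfl, hp.strictMonoOn_Icc_succ ⟨hl₁, by omega⟩ ⟨by omega, by omega⟩ (by omega)⟩

theorem exists_hatRk_eq_tildeRk (hp : IsPrune A s x nt xs) {l : ℕ} (hl : l ∈ Set.Icc 1 nt) :
    ∃ j ∈ Set.Ico (xs l) (xs (l + 1)), hatRk s j = tildeRk s xs l :=
  Nat.sInf_mem ⟨_, Set.mem_image_of_mem _ (hp.self_mem_window hl)⟩

theorem tildeRk_mem_Icc (hs : s.Valid) (hp : IsPrune A s x nt xs) {l : ℕ}
    (hl : l ∈ Set.Icc 1 nt) : tildeRk s xs l ∈ Set.Icc 1 (s.n + 1) := by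
  obtain ⟨j, hj, hjl⟩ := hp.exists_hatRk_eq_tildeRk hl
  exact hjl ▸ hatRk_mem_Icc hs (hp.mem_Icc_of_mem_window hl hj)

theorem two_mul_rankIdx_mem_window (hs : s.Valid) (hp : IsPrune A s x nt xs) {l : ℕ}
    (hl : l ∈ Set.Icc 1 nt) (hle : tildeRk s xs l ≤ s.n) :
    2 * s.rankIdx (tildeRk s xs l) ∈ Set.Ico (xs l) (xs (l + 1)) := by
  obtain ⟨j, hj, hjl⟩ := hp.exists_hatRk_eq_tildeRk hl
  rw [← hjl, ← eq_two_mul_rankIdx hs (hp.mem_Icc_of_mem_window hl hj) (hjl ▸ hle)]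
  exact hj

theorem eq_of_tildeRk_eq (hs : s.Valid) (hp : IsPrune A s x nt xs) {l l' : ℕ}
    (hl : l ∈ Set.Icc 1 nt) (hl' : l' ∈ Set.Icc 1 nt) (h : tildeRk s xs l = tildeRk s xs l')
    (hle : tildeRk s xs l ≤ s.n) : l = l' :=
  hp.eq_of_mem_window hl hl' (hp.two_mul_rankIdx_mem_window hs hl hle)
    (h ▸ hp.two_mul_rankIdx_mem_window hs hl' (h ▸ hle))

end IsPrune

/-- The ranking `α̌` of the merge step. -/
noncomputable def mergeRk (s : Slice Q) (xs b : ℕ → ℕ) (i : ℕ) : ℕ :=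
  sInf (tildeRk s xs '' Set.Icc (b (i - 1) + 1) (b i))

theorem IsIntervalPartition.exists_tildeRk_eq_mergeRk {s : Slice Q} {nt n' : ℕ} {xs b : ℕ → ℕ}
    (hb : IsIntervalPartition nt n' b) {i : ℕ} (hi : i ∈ Set.Icc 1 n') :
    ∃ l ∈ Set.Icc (b (i - 1) + 1) (b i), tildeRk s xs l = mergeRk s xs b i :=
  Nat.sInf_mem ((Set.nonempty_Icc.2 (hb.apply_sub_one_lt hi)).image (tildeRk s xs))

section Transition

variable [Fintype Q] {A : NBA Q Alp} {s s' : Slice Q} {x : Alp} {pr nt n' k : ℕ}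
  {xs b : ℕ → ℕ}

noncomputable def dominatingRank (A : NBA Q Alp) (s : Slice Q) (x : Alp) (nt : ℕ)
    (xs : ℕ → ℕ) : ℕ :=
  domRank (greenSet A s x nt xs) (redSet s nt xs) (Fintype.card Q)

theorem one_le_dominatingRank (hs : s.Valid) : 1 ≤ dominatingRank A s x nt xs := by
  unfold dominatingRank domRank
  split_ifs with hne
  · obtain ⟨-, j, hj, -, hjr⟩ | ⟨⟨j, hj, hjr⟩, -⟩ := Nat.sInf_mem hne <;>
      exact hjr ▸ (hatRk_mem_Icc hs hj).1
  · omega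

namespace TransVia

theorem le_dominatingRank (h : TransVia A s x s' pr nt xs n' b) (hk : 2 * k ≤ pr) :
    k ≤ dominatingRank A s x nt xs := by
  obtain ⟨-, -, -, ⟨-, hpr⟩ | ⟨-, hpr⟩, -⟩ := h <;> unfold dominatingRank <;> omega

theorem dominatingRank_eq_of_priority_eq (hs : s.Valid) (h : TransVia A s x s' pr nt xs n' b)
    (hk : pr = 2 * k) : dominatingRank A s x nt xs = k ∧ k ∈ greenSet A s x nt xs := by
  have hK := one_le_dominatingRank (A := A) (x := x) (nt := nt) (xs := xs) hs
  unfold dominatingRank at hK ⊢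
  obtain ⟨-, -, -, ⟨hG, hpr⟩ | ⟨-, hpr⟩, -⟩ := h
  · obtain rfl : domRank (greenSet A s x nt xs) (redSet s nt xs) (Fintype.card Q) = k := by omega
    exact ⟨rfl, hG⟩
  · omega

/-- A red rank `v ≤ k` would be dominating and give the odd priority `2v - 1 < 2k`. -/
theorem exists_tildeRk_eq (hs : s.Valid) (h : TransVia A s x s' pr nt xs n' b)
    (hk : 2 * k ≤ pr) {v : ℕ} (hv : v ∈ Set.Icc 1 k) (hvn : v ≤ s.n) :
    ∃ l ∈ Set.Icc 1 nt, tildeRk s xs l = v := by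
  obtain ⟨hv₁, hv₂⟩ := hv
  by_contra hnot
  obtain ⟨i, ⟨hi₁, hi₂⟩, hiv⟩ := hs.2.2.1.surjOn ⟨hv₁, hvn⟩
  have hred : v ∈ redSet s nt xs :=
    ⟨⟨2 * i, ⟨by omega, by omega⟩, by simp [hatRk, hiv]⟩, hnot⟩
  have hKv : dominatingRank A s x nt xs ≤ v := by
    unfold dominatingRank domRank
    rw [if_pos ⟨v, Or.inr hred⟩]
    exact Nat.sInf_le (Or.inr hred)
  have hkK := h.le_dominatingRank hk
  unfold dominatingRank at hKv hkK
  obtain ⟨-, -, -, ⟨⟨hG, -⟩, -⟩ | ⟨-, hpr⟩, -⟩ := h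
  · rw [show domRank (greenSet A s x nt xs) (redSet s nt xs) (Fintype.card Q) = v by omega]
      at hG
    exact hnot hG
  · omega

theorem eq_of_tildeRk_lt (h : TransVia A s x s' pr nt xs n' b) {i l l' : ℕ}
    (hi : i ∈ Set.Icc 1 n') (hl : l ∈ Set.Icc (b (i - 1) + 1) (b i))
    (hlt : tildeRk s xs l < dominatingRank A s x nt xs)
    (hl' : l' ∈ Set.Icc (b (i - 1) + 1) (b i)) : l' = l := by
  obtain ⟨-, -, hmerge, -⟩ := h
  have := (hmerge i hi l hl).1 hlt
  obtain ⟨hl₁, hl₂⟩ := hl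
  obtain ⟨hl₁', hl₂'⟩ := hl'
  omega

theorem eq_of_tildeRk_le (h : TransVia A s x s' pr nt xs n' b) {i l : ℕ}
    (hi : i ∈ Set.Icc 1 n') (hl : l ∈ Set.Icc (b (i - 1) + 1) (b i))
    (hle : tildeRk s xs l ≤ dominatingRank A s x nt xs) : l = b i := by
  rcases hle.eq_or_lt with heq | hlt
  · obtain ⟨-, -, hmerge, -⟩ := h
    exact (hmerge i hi l hl).2 heq
  · exact (h.eq_of_tildeRk_lt hi hl hlt ⟨h.2.1.apply_sub_one_lt hi, le_rfl⟩).symm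

theorem mergeRk_eq (h : TransVia A s x s' pr nt xs n' b) {i l : ℕ}
    (hi : i ∈ Set.Icc 1 n') (hl : l ∈ Set.Icc (b (i - 1) + 1) (b i))
    (hle : tildeRk s xs l ≤ dominatingRank A s x nt xs) : mergeRk s xs b i = tildeRk s xs l := by
  refine le_antisymm (Nat.sInf_le (Set.mem_image_of_mem _ hl)) ?_
  obtain ⟨l', hl', hl'r⟩ := h.2.1.exists_tildeRk_eq_mergeRk (s := s) (xs := xs) hi
  rw [← hl'r]
  by_contra! hlt
  rw [h.eq_of_tildeRk_lt hi hl' (hlt.trans_le hle) hl] at hlt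
  exact lt_irrefl _ hlt

/-- All smaller ranks survive as singleton blocks, so normalisation gives rank `k` back. -/
theorem rk_eq (hs : s.Valid) (h : TransVia A s x s' pr nt xs n' b) (hk : 2 * k ≤ pr)
    (hkn : k ∈ Set.Icc 1 s.n) {l i : ℕ} (hlk : tildeRk s xs l = k)
    (hi : i ∈ Set.Icc 1 n') (hli : l ∈ Set.Icc (b (i - 1) + 1) (b i)) : s'.rk i = k := by
  have hK := h.le_dominatingRank hk
  obtain ⟨hp, hb, -, -, hn, -, hs', hord⟩ := id h
  have hblock : ∀ {i}, i ∈ Set.Icc 1 n' →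
      ∃ l ∈ Set.Icc 1 nt, l ∈ Set.Icc (b (i - 1) + 1) (b i) ∧ tildeRk s xs l = mergeRk s xs b i :=
    fun hi => by
      obtain ⟨l, hl, hlr⟩ := hb.exists_tildeRk_eq_mergeRk (s := s) (xs := xs) hi
      exact ⟨l, hb.mem_Icc_of_mem_block hi hl, hl, hlr⟩
  refine Set.BijOn.eq_of_lt_imp_lt (f := mergeRk s xs b) (hn ▸ hs'.2.2.1) hord
    (fun i hi => ?_) (fun i hi j hj hij hle => ?_) (fun v hv => ?_) hi
    ((h.mergeRk_eq hi hli (hlk ▸ hK)).trans hlk)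
  · obtain ⟨l, hl, -, hlr⟩ := hblock hi
    exact hlr ▸ (hp.tildeRk_mem_Icc hs hl).1
  · obtain ⟨l₁, hl₁, hli₁, hlr₁⟩ := hblock hi
    obtain ⟨l₂, hl₂, hli₂, hlr₂⟩ := hblock hj
    obtain rfl := hp.eq_of_tildeRk_eq hs hl₁ hl₂ (by rw [hlr₁, hlr₂, hij])
      (by rw [hlr₁]; exact hle.trans hkn.2)
    exact le_antisymm (hb.le_of_mem_block hi hj hli₁ hli₂ le_rfl)
      (hb.le_of_mem_block hj hi hli₂ hli₁ le_rfl)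
  · obtain ⟨l', hl', hl'v⟩ := h.exists_tildeRk_eq hs hk ⟨hv.1, hv.2.le⟩ (by grind)
    obtain ⟨i', hi', hli'⟩ := hb.exists_mem_block hl'
    exact ⟨i', hi', (h.mergeRk_eq hi' hli' (by grind)).trans hl'v⟩

theorem mem_Icc_n_of_le_priority (hs : s.Valid) (h : TransVia A s x s' pr nt xs n' b)
    (hk : 2 * k ≤ pr) (hkn : k ∈ Set.Icc 1 s.n) : k ∈ Set.Icc 1 s'.n := by
  obtain ⟨l, hl, hlk⟩ := h.exists_tildeRk_eq hs hk ⟨hkn.1, le_rfl⟩ hkn.2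
  obtain ⟨i, hi, hli⟩ := h.2.1.exists_mem_block hl
  rw [← h.rk_eq hs hk hkn hlk hi hli]
  obtain ⟨-, -, -, -, hn, -, hs', -⟩ := h
  exact hs'.2.2.1.mapsTo (hn ▸ hi)

theorem mem_Icc_n_of_priority_eq (hs : s.Valid) (h : TransVia A s x s' pr nt xs n' b)
    (hk : pr = 2 * k) : k ∈ Set.Icc 1 s'.n := by
  obtain ⟨hK, ⟨l, hl, hlk⟩, -⟩ := h.dominatingRank_eq_of_priority_eq hs hk
  have hk₁ : 1 ≤ k := hK ▸ one_le_dominatingRank hs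
  have hkn : k ≤ s.n + 1 := hlk ▸ (h.1.tildeRk_mem_Icc hs hl).2
  obtain ⟨-, -, -, -, hn, -⟩ := id h
  refine ⟨hk₁, hn ▸ le_of_forall_mem_image_Icc (f := mergeRk s xs b) fun v hv => ?_⟩
  obtain ⟨l', hl', hl'v⟩ : ∃ l' ∈ Set.Icc 1 nt, tildeRk s xs l' = v := by
    rcases hv.2.eq_or_lt with rfl | hlt
    · exact ⟨l, hl, hlk⟩
    · exact h.exists_tildeRk_eq hs hk.ge ⟨hv.1, hlt.le⟩ (by omega)
  obtain ⟨i, hi, hli⟩ := h.2.1.exists_mem_block hl'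
  exact ⟨i, hi, (h.mergeRk_eq hi hli (by grind)).trans hl'v⟩

theorem exists_host (hs : s.Valid) (h : TransVia A s x s' pr nt xs n' b) (hk : 2 * k ≤ pr)
    (hkn : k ∈ Set.Icc 1 s.n) :
    ∃ lk ∈ Set.Icc 1 nt, 2 * s.rankIdx k ∈ Set.Ico (xs lk) (xs (lk + 1)) ∧
      s'.rankIdx k ∈ Set.Icc 1 n' ∧
      lk ∈ Set.Icc (b (s'.rankIdx k - 1) + 1) (b (s'.rankIdx k)) ∧ lk = b (s'.rankIdx k) := by
  obtain ⟨lk, hlk, hlkk⟩ := h.exists_tildeRk_eq hs hk ⟨hkn.1, le_rfl⟩ hkn.2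
  obtain ⟨i, hi, hli⟩ := h.2.1.exists_mem_block hlk
  obtain ⟨-, -, -, -, hn, -, hs', -⟩ := id h
  obtain rfl : i = s'.rankIdx k :=
    h.rk_eq hs hk hkn hlkk hi hli ▸ Slice.eq_rankIdx hs' (hn ▸ hi)
  exact ⟨lk, hlk, hlkk ▸ h.1.two_mul_rankIdx_mem_window hs hlk (hlkk ▸ hkn.2), hi, hli,
    h.eq_of_tildeRk_le hi hli (hlkk ▸ h.le_dominatingRank hk)⟩

theorem exists_mem_hatS (h : TransVia A s x s' pr nt xs n' b) {q' : Q} (hq' : q' ∈ s'.states) :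
    ∃ l ∈ Set.Icc 1 nt, ∃ i ∈ Set.Icc 1 n', l ∈ Set.Icc (b (i - 1) + 1) (b i) ∧
      q' ∈ s'.S i ∧ q' ∈ hatS A s x (xs l) := by
  obtain ⟨-, hb, -, -, hn, hS, -⟩ := h
  obtain ⟨i, hi, hqi⟩ := Set.mem_iUnion₂.1 hq'
  rw [hn] at hi
  obtain ⟨l, hl, hql⟩ := Set.mem_iUnion₂.1 (hS i hi ▸ hqi)
  exact ⟨l, hb.mem_Icc_of_mem_block hi hl, i, hi, hl, hqi, hql⟩

theorem exists_mem_dT (h : TransVia A s x s' pr nt xs n' b) {q' : Q} (hq' : q' ∈ s'.states) :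
    ∃ q ∈ s.states, q' ∈ dT A s q x := by
  obtain ⟨l, hl, -, -, -, -, hql⟩ := h.exists_mem_hatS hq'
  obtain ⟨q, hq, hdT⟩ := exists_mem_dT_of_mem_hatS hql
  obtain ⟨hj₁, hj₂⟩ := (h.1.2.1 l hl).1
  exact ⟨q, Set.mem_biUnion (show (xs l + 1) / 2 ∈ Set.Icc 1 s.n from ⟨by omega, by omega⟩) hq,
    hdT⟩

theorem exists_block_of_mem_states (hs : s.Valid) (h : TransVia A s x s' pr nt xs n' b) {q' : Q}
    (hq' : q' ∈ s'.states) :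
    ∃ l ∈ Set.Icc 1 nt, ∃ i ∈ Set.Icc 1 n', l ∈ Set.Icc (b (i - 1) + 1) (b i) ∧
      s'.idx q' = i ∧ q' ∈ hatS A s x (xs l) ∧ s.idx (parent A s x q') = (xs l + 1) / 2 := by
  obtain ⟨l, hl, i, hi, hli, hqi, hql⟩ := h.exists_mem_hatS hq'
  obtain ⟨q, hq, hdT⟩ := exists_mem_dT_of_mem_hatS hql
  obtain ⟨hj₁, hj₂⟩ := (h.1.2.1 l hl).1
  have hjn : (xs l + 1) / 2 ∈ Set.Icc 1 s.n := ⟨by omega, by omega⟩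
  obtain ⟨-, -, -, -, hn, -, hs', -⟩ := h
  refine ⟨l, hl, i, hi, hli, Slice.idx_eq hs' (hn ▸ hi) hqi, hql, ?_⟩
  rw [idx_parent hs (Set.mem_biUnion hjn hq) hdT, Slice.idx_eq hs hjn hq]

end TransVia

end Transition

namespace UnifiedTrans

variable [Fintype Q] {A : NBA Q Alp} {s s' : Slice Q} {x : Alp} {pr k : ℕ}

theorem valid (h : UnifiedTrans A s x s' pr) : s'.Valid := by
  obtain ⟨_, _, _, _, -, -, -, -, -, -, hs', -⟩ := h
  exact hs'

theorem parent_mem_delta (h : UnifiedTrans A s x s' pr) {q' : Q} (hq' : q' ∈ s'.states) :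
    parent A s x q' ∈ s.states ∧ q' ∈ A.delta (parent A s x q') x := by
  obtain ⟨_, _, _, _, h⟩ := h
  have hp := parent_spec (h.exists_mem_dT hq')
  exact ⟨hp.1, hp.2.1⟩

theorem mem_Icc_n_of_le_priority (hs : s.Valid) (h : UnifiedTrans A s x s' pr)
    (hk : 2 * k ≤ pr) (hkn : k ∈ Set.Icc 1 s.n) : k ∈ Set.Icc 1 s'.n := by
  obtain ⟨_, _, _, _, h⟩ := h
  exact h.mem_Icc_n_of_le_priority hs hk hkn

theorem mem_Icc_n_of_priority_eq (hs : s.Valid) (h : UnifiedTrans A s x s' pr)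
    (hk : pr = 2 * k) : k ∈ Set.Icc 1 s'.n := by
  obtain ⟨_, _, _, _, h⟩ := h
  exact h.mem_Icc_n_of_priority_eq hs hk

theorem idx_le_rankIdx (hs : s.Valid) (h : UnifiedTrans A s x s' pr) (hk : 2 * k ≤ pr)
    (hkn : k ∈ Set.Icc 1 s.n) {q' : Q} (hq' : q' ∈ s'.states)
    (hp : s.idx (parent A s x q') ≤ s.rankIdx k) : s'.idx q' ≤ s'.rankIdx k := by
  obtain ⟨nt, xs, n', b, h⟩ := h
  obtain ⟨lk, hlk, hwin, hi₀, hlki, -⟩ := h.exists_host hs hk hkn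
  obtain ⟨l, hl, i, hi, hli, rfl, -, hpl⟩ := h.exists_block_of_mem_states hs hq'
  refine h.2.1.le_of_mem_block hi hi₀ hli hlki ?_
  obtain ⟨hl₁, hl₂⟩ := hl
  obtain ⟨hlk₁, hlk₂⟩ := hlk
  have := (h.1.strictMonoOn_Icc_succ.lt_iff_lt ⟨hl₁, by omega⟩ ⟨by omega, by omega⟩).1
    (show xs l < xs (lk + 1) by grind)
  omega

theorem rankIdx_lt_idx (hs : s.Valid) (h : UnifiedTrans A s x s' pr) (hk : 2 * k ≤ pr)
    (hkn : k ∈ Set.Icc 1 s.n) {q' : Q} (hq' : q' ∈ s'.states)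
    (hp : s.rankIdx k < s.idx (parent A s x q')) : s'.rankIdx k < s'.idx q' := by
  obtain ⟨nt, xs, n', b, h⟩ := h
  obtain ⟨lk, hlk, hwin, hi₀, hlki, hlkb⟩ := h.exists_host hs hk hkn
  obtain ⟨l, hl, i, hi, hli, rfl, -, hpl⟩ := h.exists_block_of_mem_states hs hq'
  have hlt : lk < l := (h.1.1.lt_iff_lt hlk hl).1 (by grind)
  have hle := h.2.1.le_of_mem_block hi₀ hi hlki hli hlt.le
  refine lt_of_le_of_ne hle fun heq => ?_
  rw [heq] at hlkb
  exact absurd hli.2 (by omega)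

theorem idx_eq_rankIdx (hs : s.Valid) (h : UnifiedTrans A s x s' pr) (hk : 2 * k ≤ pr)
    (hkn : k ∈ Set.Icc 1 s.n) {q' : Q} (hq' : q' ∈ s'.states)
    (hp : s.idx (parent A s x q') = s.rankIdx k) (hF : q' ∉ A.F) : s'.idx q' = s'.rankIdx k := by
  obtain ⟨nt, xs, n', b, h⟩ := h
  obtain ⟨lk, hlk, hwin, hi₀, hlki, -⟩ := h.exists_host hs hk hkn
  obtain ⟨l, hl, i, hi, hli, rfl, hql, hpl⟩ := h.exists_block_of_mem_states hs hq'
  have heven : xs l % 2 = 0 := by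
    by_contra hodd
    exact hF (mem_F_of_mem_hatS (by omega) hql)
  have hxs : xs l = 2 * s.rankIdx k := by omega
  obtain rfl := h.1.eq_of_mem_window hl hlk (hxs ▸ h.1.self_mem_window hl) hwin
  exact le_antisymm (h.2.1.le_of_mem_block hi hi₀ hli hlki le_rfl)
    (h.2.1.le_of_mem_block hi₀ hi hlki hli le_rfl)

/-- A green step empties `Ŝ` at the host's right-child position `2 * rankIdx k`. -/
theorem mem_F_of_priority_eq (hs : s.Valid) (h : UnifiedTrans A s x s' pr) (hk : pr = 2 * k)
    (hkn : k ≤ s.n) {q' : Q} (hq' : q' ∈ s'.states)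
    (hp : s.idx (parent A s x q') = s.rankIdx k) : q' ∈ A.F := by
  obtain ⟨nt, xs, n', b, h⟩ := h
  obtain ⟨-, -, j, hj, hjS, hjk⟩ := h.dominatingRank_eq_of_priority_eq hs hk
  have hj' := eq_two_mul_rankIdx hs hj (hjk ▸ hkn)
  rw [hjk] at hj'
  obtain ⟨l, -, -, -, -, -, hql, hpl⟩ := h.exists_block_of_mem_states hs hq'
  by_contra hF
  have heven : xs l % 2 = 0 := by
    by_contra hodd
    exact hF (mem_F_of_mem_hatS (by omega) hql)
  rw [show xs l = j by omega, hjS] at hql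
  exact hql

/-- A non-accepting successor sits in a right-child position, after all children of sets
further left. -/
theorem idx_le_idx (hs : s.Valid) (h : UnifiedTrans A s x s' pr) {q₁ q₂ : Q}
    (hq₁ : q₁ ∈ s'.states) (hq₂ : q₂ ∈ s'.states)
    (hp : s.idx (parent A s x q₁) ≤ s.idx (parent A s x q₂)) (hF : q₂ ∉ A.F) :
    s'.idx q₁ ≤ s'.idx q₂ := by
  obtain ⟨nt, xs, n', b, h⟩ := h
  obtain ⟨l₁, hl₁, i₁, hi₁, hli₁, rfl, -, hpl₁⟩ := h.exists_block_of_mem_states hs hq₁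
  obtain ⟨l₂, hl₂, i₂, hi₂, hli₂, rfl, hql₂, hpl₂⟩ := h.exists_block_of_mem_states hs hq₂
  have heven : xs l₂ % 2 = 0 := by
    by_contra hodd
    exact hF (mem_F_of_mem_hatS (by omega) hql₂)
  have hle : l₁ ≤ l₂ := (h.1.1.le_iff_le hl₁ hl₂).1 (by omega)
  exact h.2.1.le_of_mem_block hi₁ hi₂ hli₁ hli₂ hle

end UnifiedTrans

/-- The members of the set of rank `r`, defined through `idx` so that it lies in `states` even
when no set has rank `r`. -/
def Slice.rankSet (s : Slice Q) (r : ℕ) : Set Q := {q | q ∈ s.states ∧ s.idx q = s.rankIdx r}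

theorem Slice.rankSet_nonempty {s : Slice Q} (hs : s.Valid) {r : ℕ} (hr : r ∈ Set.Icc 1 s.n) :
    (s.rankSet r).Nonempty := by
  obtain ⟨hi, -⟩ := Slice.rankIdx_spec hs hr
  obtain ⟨q, hq⟩ := hs.1 _ hi
  exact ⟨q, Set.mem_biUnion hi hq, Slice.idx_eq hs hi hq⟩

section Run

variable [Fintype Q] {A : NBA Q Alp} {B : TDPA (Slice Q) Alp} {w : ℕ → Alp} {k : ℕ}

noncomputable def runParent (A : NBA Q Alp) (B : TDPA (Slice Q) Alp) (w : ℕ → Alp) (t : ℕ) :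
    Q → Q :=
  parent A (B.run w t) (w t)

def Settled (B : TDPA (Slice Q) Alp) (w : ℕ → Alp) (k t : ℕ) : Prop :=
  (B.run w t).Valid ∧ 2 * k ≤ B.c (B.run w t) (w t) ∧ k ∈ Set.Icc 1 (B.run w t).n

namespace ObtainedUnified

theorem trans (hB : ObtainedUnified A B) (t : ℕ) :
    UnifiedTrans A (B.run w t) (w t) (B.run w (t + 1)) (B.c (B.run w t) (w t)) :=
  hB.2.2.2 _ (B.reachable_run w t) _

theorem states_run_zero (hB : ObtainedUnified A B) : (B.run w 0).states = A.Q0 :=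
  (Slice.states_eq_of_n_eq_one hB.1).trans hB.2.1

theorem runParent_mem_states (hB : ObtainedUnified A B) (t : ℕ) :
    ∀ q ∈ (B.run w (t + 1)).states, runParent A B w t q ∈ (B.run w t).states :=
  fun _ hq => ((hB.trans t).parent_mem_delta hq).1

theorem ancestor_mem_states (hB : ObtainedUnified A B) {s t : ℕ} (hst : s ≤ t) {q : Q}
    (hq : q ∈ (B.run w t).states) : ancestor (runParent A B w) s t q ∈ (B.run w s).states :=
  ancestor_mem (X := fun t => (B.run w t).states) hB.runParent_mem_states hst hq

theorem eventually_settled (hB : ObtainedUnified A B)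
    (hgreen : ∃ᶠ t in atTop, B.c (B.run w t) (w t) = 2 * k)
    (hge : ∀ᶠ t in atTop, 2 * k ≤ B.c (B.run w t) (w t)) :
    ∀ᶠ t in atTop, Settled B w k t := by
  have hvalid : ∀ᶠ t in atTop, (B.run w t).Valid :=
    eventually_atTop.2 ⟨1, fun t ht => by
      obtain ⟨t, rfl⟩ := Nat.exists_eq_add_of_le' ht
      exact (hB.trans t).valid⟩
  obtain ⟨N, hN⟩ := eventually_atTop.1 (hvalid.and hge)
  obtain ⟨g, hgN, hg⟩ := frequently_atTop.1 hgreen N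
  refine eventually_atTop.2 ⟨g + 1, fun t ht => ?_⟩
  induction t, ht using Nat.le_induction with
  | base => exact ⟨hN _ (by omega) |>.1, hN _ (by omega) |>.2,
      (hB.trans g).mem_Icc_n_of_priority_eq (hN g hgN).1 hg⟩
  | succ t ht ih => exact ⟨hN _ (by omega) |>.1, hN _ (by omega) |>.2,
      (hB.trans t).mem_Icc_n_of_le_priority ih.1 ih.2.1 ih.2.2⟩

end ObtainedUnified

variable {T : ℕ} {r : ℕ → Q}

/-- A branch that enters the host after `T` stays there while it avoids `F`; at the next green
step it is forced into `F`. -/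
theorem idx_branch_ne_rankIdx (hB : ObtainedUnified A B) (hT : ∀ t ≥ T, Settled B w k t)
    (hgreen : ∃ᶠ t in atTop, B.c (B.run w t) (w t) = 2 * k)
    (hr : ∀ t, runParent A B w t (r (t + 1)) = r t) (hrs : ∀ t, r t ∈ (B.run w t).states)
    {M : ℕ} (hM : T ≤ M) (hF : ∀ t > M, r t ∉ A.F) {t₀ : ℕ} (ht₀ : M ≤ t₀) :
    (B.run w t₀).idx (r t₀) ≠ (B.run w t₀).rankIdx k := by
  unfold runParent at hr
  intro hhost
  have hstay : ∀ t ≥ t₀, (B.run w t).idx (r t) = (B.run w t).rankIdx k := by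
    intro t ht
    induction t, ht using Nat.le_induction with
    | base => exact hhost
    | succ t ht ih =>
      obtain ⟨hv, hpr, hkn⟩ := hT t (by omega)
      exact (hB.trans t).idx_eq_rankIdx hv hpr hkn (hrs _) ((hr t).symm ▸ ih) (hF _ (by omega))
  obtain ⟨g, hg, hgreen⟩ := frequently_atTop.1 hgreen t₀
  obtain ⟨hv, -, hkn⟩ := hT g (by omega)
  exact hF (g + 1) (by omega) <|
    (hB.trans g).mem_F_of_priority_eq hv hgreen hkn.2 (hrs _) ((hr g).symm ▸ hstay g hg)

theorem idx_branch_lt_rankIdx (hB : ObtainedUnified A B) (hT : ∀ t ≥ T, Settled B w k t)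
    (hr : ∀ t, runParent A B w t (r (t + 1)) = r t) (hrs : ∀ t, r t ∈ (B.run w t).states)
    {M : ℕ} (hM : T ≤ M) (hne : ∀ t ≥ M, (B.run w t).idx (r t) ≠ (B.run w t).rankIdx k)
    (hlt : (B.run w M).idx (r M) < (B.run w M).rankIdx k) :
    ∀ t ≥ M, (B.run w t).idx (r t) < (B.run w t).rankIdx k := by
  unfold runParent at hr
  intro t ht
  induction t, ht using Nat.le_induction with
  | base => exact hlt
  | succ t ht ih =>
    obtain ⟨hv, hpr, hkn⟩ := hT t (by omega)
    exact lt_of_le_of_ne ((hB.trans t).idx_le_rankIdx hv hpr hkn (hrs _) ((hr t).symm ▸ ih.le))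
      (hne _ (by omega))

theorem idx_ancestor_le_idx_branch (hB : ObtainedUnified A B) (hT : ∀ t ≥ T, Settled B w k t)
    (hr : ∀ t, runParent A B w t (r (t + 1)) = r t) (hrs : ∀ t, r t ∈ (B.run w t).states)
    {M t : ℕ} (hM : T ≤ M) (hF : ∀ t > M, r t ∉ A.F) {q : Q} (hq : q ∈ (B.run w t).states)
    (hanc : ancestor (runParent A B w) M t q = r M) :
    ∀ s, M ≤ s → s ≤ t →
      (B.run w s).idx (ancestor (runParent A B w) s t q) ≤ (B.run w s).idx (r s) := by
  intro s hs
  induction s, hs using Nat.le_induction with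
  | base => exact fun _ => hanc ▸ le_rfl
  | succ s hs ih =>
    intro hst
    refine (hB.trans s).idx_le_idx (hT s (by omega)).1 (hB.ancestor_mem_states hst hq) (hrs _)
      ?_ (hF _ (by omega))
    have h := ih (by omega)
    rw [ancestor_eq_par (show s < t by omega), ← hr s] at h
    exact h

theorem rankIdx_lt_idx_ancestor (hB : ObtainedUnified A B) (hT : ∀ t ≥ T, Settled B w k t)
    {M t : ℕ} (hM : T ≤ M) {q : Q} (hq : q ∈ (B.run w t).states)
    (hlt : (B.run w M).rankIdx k < (B.run w M).idx (ancestor (runParent A B w) M t q)) :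
    ∀ s, M ≤ s → s ≤ t →
      (B.run w s).rankIdx k < (B.run w s).idx (ancestor (runParent A B w) s t q) := by
  intro s hs
  induction s, hs using Nat.le_induction with
  | base => exact fun _ => hlt
  | succ s hs ih =>
    intro hst
    obtain ⟨hv, hpr, hkn⟩ := hT s (by omega)
    refine (hB.trans s).rankIdx_lt_idx hv hpr hkn (hB.ancestor_mem_states hst hq) ?_
    have h := ih (by omega)
    rw [ancestor_eq_par (show s < t by omega)] at h
    exact h

theorem frequently_mem_F_of_branch (hB : ObtainedUnified A B) (hT : ∀ t ≥ T, Settled B w k t)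
    (hgreen : ∃ᶠ t in atTop, B.c (B.run w t) (w t) = 2 * k)
    (hr : ∀ t, runParent A B w t (r (t + 1)) = r t) (hrs : ∀ t, r t ∈ (B.run w t).states)
    (hdesc : ∀ s, ∃ᶠ t in atTop,
      ∃ q ∈ (B.run w t).rankSet k, ancestor (runParent A B w) s t q = r s) :
    ∃ᶠ t in atTop, r t ∈ A.F := by
  by_contra hfin
  obtain ⟨M, hM⟩ := eventually_atTop.1 (not_frequently.1 hfin)
  have hF : ∀ t > max M T, r t ∉ A.F := fun t ht => hM t (by omega)
  have hne := fun t => idx_branch_ne_rankIdx hB hT hgreen hr hrs (le_max_right M T) hF (t₀ := t)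
  obtain ⟨t, ⟨q, ⟨hq, hqk⟩, hanc⟩, hMt⟩ :=
    ((hdesc (max M T)).and_eventually (eventually_ge_atTop (max M T))).exists
  rcases lt_or_gt_of_ne (hne _ le_rfl) with hlt | hgt
  · have hle := idx_ancestor_le_idx_branch hB hT hr hrs (le_max_right M T) hF hq hanc t hMt le_rfl
    have hlt' := idx_branch_lt_rankIdx hB hT hr hrs (le_max_right M T) hne hlt t hMt
    rw [ancestor_self] at hle
    omega
  · have := rankIdx_lt_idx_ancestor hB hT (le_max_right M T) hq (hanc ▸ hgt) t hMt le_rfl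
    rw [ancestor_self, hqk] at this
    exact lt_irrefl _ this

end Run

theorem dpa_to_nba_general {Q Alp : Type} [Fintype Q] (A : NBA Q Alp)
    (B : TDPA (Slice Q) Alp) (hB : ObtainedUnified A B)
    (w : ℕ → Alp) (hw : B.Accepts w) : A.Accepts w := by
  obtain ⟨k, hgreen, hge⟩ := hw.exists_even
  obtain ⟨T, hT⟩ := eventually_atTop.1 (hB.eventually_settled hgreen hge)
  have hhost : ∃ᶠ t in atTop, ((B.run w t).rankSet k).Nonempty := Eventually.frequently <|
    eventually_atTop.2 ⟨T, fun t ht => Slice.rankSet_nonempty (hT t ht).1 (hT t ht).2.2⟩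
  obtain ⟨r, hrs, hr, hdesc⟩ := exists_branch_of_frequently_nonempty hB.runParent_mem_states
    (fun t _ hq => hq.1) hhost
  refine ⟨r, ⟨hB.states_run_zero ▸ hrs 0, fun t => ?_⟩,
    frequently_atTop.1 (frequently_mem_F_of_branch hB hT hgreen hr hrs hdesc)⟩
  exact hr t ▸ ((hB.trans t).parent_mem_delta (hrs (t + 1))).2

/-- If `B` is obtained from the unified construction for `A` and
`w ∈ L(B)`, then `w ∈ L(A)`. -/
theorem dpa_to_nba {Q Alp : Type} [Fintype Q] (A : NBA Q Alp)
    (hQ0 : A.Q0.Nonempty) (B : TDPA (Slice Q) Alp) (hB : ObtainedUnified A B)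
    (w : ℕ → Alp) (hw : B.Accepts w) : A.Accepts w :=
  dpa_to_nba_general A B hB w hw
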